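/- arXiv:1304.6214 — 4 statements merged into one kernel-verified Lean document; each statement's English description precedes it below -/
import Mathlib

section
/- Let f : [a,b] → ℝ be continuous, and suppose every critical point of f in the open interval (a,b) (where f is differentiable) is a strict local minimum. Then f has at most one critical point in (a,b). -/
open Set

lemma aux_no_two_crit
    (f : ℝ → ℝ) (a b : ℝ)
    (hcont : ContinuousOn f (Icc a b))
    (hmin : ∀ x ∈ Ioo a b, deriv f x = 0 →
      ∀ᶠ z in nhdsWithin x {x}ᶜ, f x < f z)
    (x₁ x₂ : ℝ) (h₁ : x₁ ∈ Ioo a b) (h₂ : x₂ ∈ Ioo a b)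
    (d₁ : deriv f x₁ = 0) (d₂ : deriv f x₂ = 0) (hlt : x₁ < x₂) : False := by
  have hsub : Icc x₁ x₂ ⊆ Icc a b :=
    Icc_subset_Icc h₁.1.le h₂.2.le
  have hc : ContinuousOn f (Icc x₁ x₂) := hcont.mono hsub
  obtain ⟨c, hcmem, hcmax⟩ :=
    isCompact_Icc.exists_isMaxOn (nonempty_Icc.mpr hlt.le) hc
  have hcIoo : c ∈ Ioo a b :=
    ⟨lt_of_lt_of_le h₁.1 hcmem.1, lt_of_le_of_lt hcmem.2 h₂.2⟩
  -- deriv f c = 0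
  have hdc : deriv f c = 0 := by
    rcases eq_or_lt_of_le hcmem.1 with h | h
    · rw [← h]; exact d₁
    rcases eq_or_lt_of_le hcmem.2 with h' | h'
    · rw [h']; exact d₂
    · -- interior local max
      have hnb : Icc x₁ x₂ ∈ nhds c := Icc_mem_nhds h h'
      have : IsLocalMax f c := by
        filter_upwards [hnb] with z hz using hcmax hz
      exact this.deriv_eq_zero
  have hstrict := hmin c hcIoo hdc
  -- pick a side where we can find nearby points in Icc x₁ x₂
  rcases lt_or_eq_of_le hcmem.2 with h | h
  · -- c < x₂ : look right
    have hle : nhdsWithin c (Ioi c) ≤ nhdsWithin c {c}ᶜ :=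
      nhdsWithin_mono c (fun z hz => ne_of_gt hz)
    have h1 : ∀ᶠ z in nhdsWithin c (Ioi c), f c < f z := hle hstrict
    have h2 : Ioc c x₂ ∈ nhdsWithin c (Ioi c) :=
      Ioc_mem_nhdsGT_of_mem ⟨le_refl c, h⟩
    obtain ⟨z, hz1, hz2⟩ := (h1.and (Filter.eventually_mem_set.mpr h2)).exists
    exact absurd (hcmax ⟨hcmem.1.trans hz2.1.le, hz2.2⟩) (not_le.mpr hz1)
  · -- c = x₂ : look left
    have hx1c : x₁ < c := h ▸ hlt
    have hle : nhdsWithin c (Iio c) ≤ nhdsWithin c {c}ᶜ :=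
      nhdsWithin_mono c (fun z hz => ne_of_lt hz)
    have h1 : ∀ᶠ z in nhdsWithin c (Iio c), f c < f z := hle hstrict
    have h2 : Ico x₁ c ∈ nhdsWithin c (Iio c) :=
      Ico_mem_nhdsLT_of_mem ⟨hx1c, le_refl c⟩
    obtain ⟨z, hz1, hz2⟩ := (h1.and (Filter.eventually_mem_set.mpr h2)).exists
    exact absurd (hcmax ⟨hz2.1, hz2.2.le.trans hcmem.2⟩) (not_le.mpr hz1)

/-- If f is continuous on [a,b], continuously differentiable on
(a,b), and every interior critical point is a strict local minimum, then f has
at most one critical point in (a,b). -/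
theorem at_most_one_critical_point
    (f : ℝ → ℝ) (a b : ℝ) (hab : a < b)
    (hcont : ContinuousOn f (Icc a b))
    (hdiff : ∀ x ∈ Ioo a b, DifferentiableAt ℝ f x)
    (hderiv : ContinuousOn (deriv f) (Ioo a b))
    (hmin : ∀ x ∈ Ioo a b, deriv f x = 0 →
      ∀ᶠ z in nhdsWithin x {x}ᶜ, f x < f z) :
    ∀ x₁ ∈ Ioo a b, ∀ x₂ ∈ Ioo a b,
      deriv f x₁ = 0 → deriv f x₂ = 0 → x₁ = x₂ := by
  intro x₁ h₁ x₂ h₂ d₁ d₂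
  rcases lt_trichotomy x₁ x₂ with h | h | h
  · exact absurd (aux_no_two_crit f a b hcont hmin x₁ x₂ h₁ h₂ d₁ d₂ h) not_false
  · exact h
  · exact absurd (aux_no_two_crit f a b hcont hmin x₂ x₁ h₂ h₁ d₂ d₁ h) not_false
end

section
/- Let x13, x14, x24, x25, x35 be positive reals and let α1, β1, γ1, α2, β2, γ2 be strictly negative reals. Define A = α1/x14^2 + β1/x24^2, B = γ1/x25^2 - (x13^2/x35^2)·(α2/x14^2 + β2/x24^2), and C = -x13^2 γ2/(x35^2 x25^2). Then A < 0 and C > 0, hence A·C < 0, and consequently the system −∂E/∂x35 = A' + sγ1/x25^2 + st/x35^2 = 0, −∂E/∂x13 = A'' + t/x13^2 + sγ2/x25^2 = 0 (with A' = α1/x14^2 + β1/x24^2, A'' = α2/x14^2 + β2/x24^2) has exactly one solution (s,t) with s > 0. -/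
set_option maxHeartbeats 1000000 in
/-- Sign analysis for the pentagon critical-point system. With all
α's, β's, γ's negative and all diagonals positive, A < 0, C > 0, so A·C < 0,
and the system for the controlling charges (s,t) has exactly one solution with
s > 0. -/
theorem pentagon_charge_system_unique_solution
    (x13 x14 x24 x25 x35 : ℝ)
    (h13 : 0 < x13) (h14 : 0 < x14) (h24 : 0 < x24)
    (h25 : 0 < x25) (h35 : 0 < x35)
    (α₁ β₁ γ₁ α₂ β₂ γ₂ : ℝ)
    (hα₁ : α₁ < 0) (hβ₁ : β₁ < 0) (hγ₁ : γ₁ < 0)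
    (hα₂ : α₂ < 0) (hβ₂ : β₂ < 0) (hγ₂ : γ₂ < 0) :
    (α₁/x14^2 + β₁/x24^2 < 0) ∧
    (0 < -x13^2 * γ₂ / (x35^2 * x25^2)) ∧
    ((α₁/x14^2 + β₁/x24^2) * (-x13^2 * γ₂ / (x35^2 * x25^2)) < 0) ∧
    (∃! p : ℝ × ℝ, 0 < p.1 ∧
      α₁/x14^2 + β₁/x24^2 + p.1 * γ₁/x25^2 + p.1 * p.2 / x35^2 = 0 ∧
      α₂/x14^2 + β₂/x24^2 + p.2 / x13^2 + p.1 * γ₂/x25^2 = 0) := by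
  have h14sq : (0:ℝ) < x14^2 := pow_pos h14 2
  have h24sq : (0:ℝ) < x24^2 := pow_pos h24 2
  have h25sq : (0:ℝ) < x25^2 := pow_pos h25 2
  have h35sq : (0:ℝ) < x35^2 := pow_pos h35 2
  have h13sq : (0:ℝ) < x13^2 := pow_pos h13 2
  have hA : α₁/x14^2 + β₁/x24^2 < 0 := by
    have h1 := div_neg_of_neg_of_pos hα₁ h14sq
    have h2 := div_neg_of_neg_of_pos hβ₁ h24sq
    linarith
  have hC : 0 < -x13^2 * γ₂ / (x35^2 * x25^2) := by
    apply div_pos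
    · nlinarith
    · positivity
  refine ⟨hA, hC, mul_neg_of_neg_of_pos hA hC, ?_⟩
  -- abbreviations (explicit, no `set`)
  have hCne : (-x13^2 * γ₂ / (x35^2 * x25^2)) ≠ 0 := ne_of_gt hC
  -- discriminant
  have hdisc : 0 < (γ₁/x25^2 - x13^2*(α₂/x14^2 + β₂/x24^2)/x35^2)^2
      - 4 * (-x13^2 * γ₂ / (x35^2 * x25^2)) * (α₁/x14^2 + β₁/x24^2) := by
    have := mul_pos hC (neg_pos.mpr hA)
    nlinarith [sq_nonneg (γ₁/x25^2 - x13^2*(α₂/x14^2 + β₂/x24^2)/x35^2)]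
  set Bq := γ₁/x25^2 - x13^2*(α₂/x14^2 + β₂/x24^2)/x35^2 with hBq
  set Cq := -x13^2 * γ₂ / (x35^2 * x25^2) with hCq
  set A1 := α₁/x14^2 + β₁/x24^2 with hA1
  set d := Real.sqrt (Bq^2 - 4*Cq*A1) with hd
  have hd2 : d^2 = Bq^2 - 4*Cq*A1 := Real.sq_sqrt hdisc.le
  have hdpos : 0 < d := Real.sqrt_pos.mpr hdisc
  have hdB : Bq < d := by nlinarith [hd2, sq_nonneg (d - Bq), sq_nonneg (d + Bq)]
  set s₀ := (d - Bq)/(2*Cq) with hs₀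
  have hs0pos : 0 < s₀ := div_pos (by linarith) (by linarith)
  set t₀ := -x13^2*(α₂/x14^2 + β₂/x24^2 + s₀*γ₂/x25^2) with ht₀
  -- quadratic holds at s₀
  have key : 2*Cq*s₀ = d - Bq := by
    rw [hs₀]; field_simp
  have hq0 : Cq*s₀^2 + Bq*s₀ + A1 = 0 := by
    have h4 : 4*Cq*(Cq*s₀^2 + Bq*s₀ + A1) = 0 := by
      linear_combination (2*Cq*s₀ + d + Bq)*key + hd2
    rcases mul_eq_zero.mp h4 with h | h
    · exact absurd h (by positivity)
    · exact h
  refine ⟨⟨s₀, t₀⟩, ⟨hs0pos, ?_, ?_⟩, ?_⟩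
  · -- eq1 at (s₀, t₀)
    show A1 + s₀ * γ₁/x25^2 + s₀ * t₀ / x35^2 = 0
    rw [hBq, hCq, hA1] at hq0
    rw [ht₀]
    linear_combination hq0
  · -- eq2 at (s₀, t₀)
    show α₂/x14^2 + β₂/x24^2 + t₀ / x13^2 + s₀ * γ₂/x25^2 = 0
    rw [ht₀]
    field_simp
    ring
  · rintro ⟨s, t⟩ ⟨hs, he1, he2⟩
    simp only at hs he1 he2 ⊢
    -- recover t from eq2
    have ht : t = -x13^2*(α₂/x14^2 + β₂/x24^2 + s*γ₂/x25^2) := by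
      have h0 : t = x13^2 * (t / x13^2) := by field_simp
      have h1 : t / x13^2 = -(α₂/x14^2 + β₂/x24^2 + s*γ₂/x25^2) := by linarith
      rw [h0, h1]; ring
    -- quadratic for s
    have hq : Cq*s^2 + Bq*s + A1 = 0 := by
      rw [hBq, hCq, hA1]
      linear_combination he1 - (s/x35^2) * ht
    have hss : s = s₀ := by
      by_contra hne
      have h1 : (s - s₀)*(Cq*(s+s₀)+Bq) = 0 := by linear_combination hq - hq0
      have h2 : Cq*(s+s₀)+Bq = 0 := by
        rcases mul_eq_zero.mp h1 with h | h
        · exact absurd (by linarith) hne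
        · exact h
      have h3 : A1 = Cq*s*s₀ := by linear_combination hq - s*h2
      have h4 : 0 < Cq*s*s₀ := by
        have := mul_pos (mul_pos hC hs) hs0pos
        linarith [mul_pos (mul_pos hC hs) hs0pos]
      linarith
    have htt : t = t₀ := by rw [ht, ht₀, hss]
    exact Prod.ext hss htt
end

section
/- Let p1, ..., p5 be a convex planar pentagon with vertex p_k aligned, i.e., the interior angle at p_k equals π (p_{k-1}, p_k, p_{k+1} are collinear with p_k strictly between). Let v be the unit vector at p_k orthogonal to the line p_{k-1}p_{k+1}, pointing outward from the pentagon. Then for every other vertex p_j (j ≠ k-1, k, k+1), the first-order change of |p_k - p_j| when p_k moves with velocity v is strictly positive: ⟨v, (p_k - p_j)/|p_k - p_j|⟩ > 0. -/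
/-!
Let `ω` be the area form of the plane and `w = p (k + 1) - p (k - 1)`. Since `v ⟂ w`, the
Lagrange identity `‖w‖² ⟪v, x⟫ = ω w v * ω w x` shows that `⟪v, ·⟫` has constant sign on each
open half-plane bounded by the line through `p (k - 1)`, `p k`, `p (k + 1)`. Strict convexity at
the two vertices next to that line puts `p (k + 2)` and `p (k + 3)`, hence also the centroid,
strictly on one side of it; the centroid lies on the inward side of `v`, so the two remaining
vertices do as well.
-/

open RealInnerProductSpace

/-- The signed cross product of the edges at consecutive vertices i, i+1, i+2
of a planar pentagon; nonnegativity everywhere means (weak) convexity in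
counterclockwise cyclic order, and vanishing at i means vertex i+1 is aligned. -/
def crossAt' (p : Fin 5 → EuclideanSpace ℝ (Fin 2)) (i : Fin 5) : ℝ :=
  (p (i+1) 0 - p i 0) * (p (i+2) 1 - p (i+1) 1)
    - (p (i+1) 1 - p i 1) * (p (i+2) 0 - p (i+1) 0)

open Module

namespace Orientation

variable {E : Type*} [NormedAddCommGroup E] [InnerProductSpace ℝ E] [Fact (finrank ℝ E = 2)]
  (o : Orientation ℝ E (Fin 2))

local notation "ω" => o.areaForm

theorem areaForm_sub_lineMap (a c x : E) (t : ℝ) :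
    ω (c - a) (x - AffineMap.lineMap a c t) = ω (c - a) (x - a) := by
  have hx : x - AffineMap.lineMap a c t = (x - a) - t • (c - a) := by
    rw [AffineMap.lineMap_apply_module']; abel
  rw [hx, map_sub, map_smul, areaForm_apply_self, smul_zero, sub_zero]

theorem areaForm_pos_of_mem_openSegment_of_areaForm_pos_left {a b c d : E}
    (hb : b ∈ openSegment ℝ a c) (h : 0 < ω (c - b) (d - c)) : 0 < ω (c - a) (d - b) := by
  rw [openSegment_eq_image_lineMap] at hb
  obtain ⟨t, ⟨-, ht⟩, rfl⟩ := hb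
  have hcb : c - AffineMap.lineMap a c t = (1 - t) • (c - a) := by
    rw [AffineMap.lineMap_apply_module']; module
  rw [hcb, map_smul, LinearMap.smul_apply, smul_eq_mul] at h
  rw [areaForm_sub_lineMap, ← sub_add_sub_cancel d c a, map_add, areaForm_apply_self, add_zero]
  exact pos_of_mul_pos_right h (by linarith)

theorem areaForm_pos_of_mem_openSegment_of_areaForm_pos_right {a b c e : E}
    (hb : b ∈ openSegment ℝ a c) (h : 0 < ω (a - e) (b - a)) : 0 < ω (c - a) (e - b) := by
  rw [openSegment_eq_image_lineMap] at hb
  obtain ⟨t, ⟨ht, -⟩, rfl⟩ := hb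
  have hba : AffineMap.lineMap a c t - a = t • (c - a) := by
    rw [AffineMap.lineMap_apply_module']; module
  rw [hba, map_smul, smul_eq_mul, o.areaForm_swap, ← map_neg, neg_sub] at h
  rw [areaForm_sub_lineMap]
  exact pos_of_mul_pos_right h ht.le

theorem inner_neg_of_areaForm_pos_of_inner_neg {v w y z : E} (hvw : ⟪v, w⟫ = 0)
    (hy : 0 < ω w y) (hz : 0 < ω w z) (hvy : ⟪v, y⟫ < 0) : ⟪v, z⟫ < 0 := by
  have key : ∀ x, ‖w‖ ^ 2 * ⟪v, x⟫ = ω w v * ω w x := fun x => by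
    rw [← o.inner_mul_inner_add_areaForm_mul_areaForm, real_inner_comm, hvw, zero_mul, zero_add]
  have hw : 0 < ‖w‖ ^ 2 := by
    have : w ≠ 0 := by rintro rfl; simp at hy
    positivity
  have hv : ω w v < 0 :=
    neg_of_mul_neg_left (by rw [← key]; exact mul_neg_of_pos_of_neg hw hvy) hy.le
  exact neg_of_mul_neg_right (by rw [key]; exact mul_neg_of_neg_of_pos hv hz) hw.le

end Orientation

instance : Fact (finrank ℝ (EuclideanSpace ℝ (Fin 2)) = 2) := ⟨finrank_euclideanSpace_fin⟩

theorem EuclideanSpace.areaForm_basisFun_apply (x y : EuclideanSpace ℝ (Fin 2)) :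
    (EuclideanSpace.basisFun (Fin 2) ℝ).toBasis.orientation.areaForm x y
      = x 0 * y 1 - x 1 * y 0 := by
  rw [Orientation.areaForm_to_volumeForm, Orientation.volumeForm_robust _ _ rfl, Basis.det_apply,
    Matrix.det_fin_two]
  simp only [Basis.toMatrix_apply, Matrix.cons_val_zero, Matrix.cons_val_one,
    Matrix.cons_val_fin_one, OrthonormalBasis.coe_toBasis_repr_apply, EuclideanSpace.basisFun_repr]
  ring

theorem crossAt'_eq_areaForm (p : Fin 5 → EuclideanSpace ℝ (Fin 2)) (i : Fin 5) :
    crossAt' p i = (EuclideanSpace.basisFun (Fin 2) ℝ).toBasis.orientation.areaForm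
      (p (i + 1) - p i) (p (i + 2) - p (i + 1)) := by
  rw [EuclideanSpace.areaForm_basisFun_apply, crossAt']
  simp only [PiLp.sub_apply]

theorem aligned_vertex_outward_pull_increases_diagonals_general
    (p : Fin 5 → EuclideanSpace ℝ (Fin 2)) (k : Fin 5)
    (hstrict : ∀ i : Fin 5, i + 1 ≠ k → 0 < crossAt' p i)
    (haligned : p k ∈ openSegment ℝ (p (k-1)) (p (k+1)))
    (v : EuclideanSpace ℝ (Fin 2))
    (horth : ⟪v, p (k+1) - p (k-1)⟫ = 0)
    (hout : ⟪v, (5:ℝ)⁻¹ • (∑ i : Fin 5, p i) - p k⟫ < 0) :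
    ∀ j : Fin 5, j ≠ k - 1 → j ≠ k → j ≠ k + 1 →
      0 < ⟪v, ‖p k - p j‖⁻¹ • (p k - p j)⟫ := by
  set o := (EuclideanSpace.basisFun (Fin 2) ℝ).toBasis.orientation
  set w := p (k + 1) - p (k - 1)
  have hside : ∀ j, j ≠ k - 1 → j ≠ k → j ≠ k + 1 → 0 < o.areaForm w (p j - p k) := by
    intro j hj₁ hj₂ hj₃
    obtain rfl | rfl : j = k + 2 ∨ j = k + 3 := by omega
    · have h := hstrict k (by omega)
      rw [crossAt'_eq_areaForm] at h
      exact o.areaForm_pos_of_mem_openSegment_of_areaForm_pos_left haligned h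
    · have h := hstrict (k + 3) (by omega)
      rw [crossAt'_eq_areaForm, show k + 3 + 1 = k - 1 by omega, show k + 3 + 2 = k by omega] at h
      exact o.areaForm_pos_of_mem_openSegment_of_areaForm_pos_right haligned h
  have hline : ∀ j, j = k - 1 ∨ j = k ∨ j = k + 1 → o.areaForm w (p j - p k) = 0 := by
    rw [openSegment_eq_image_lineMap] at haligned
    obtain ⟨t, -, ht⟩ := haligned
    rintro j (rfl | rfl | rfl)
    · rw [← ht, o.areaForm_sub_lineMap, sub_self, map_zero]
    · rw [sub_self, map_zero]
    · rw [← ht, o.areaForm_sub_lineMap, o.areaForm_apply_self]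
  have hcentroid : 0 < o.areaForm w ((5:ℝ)⁻¹ • (∑ i : Fin 5, p i) - p k) := by
    have hsum : (5:ℝ)⁻¹ • (∑ i : Fin 5, p i) - p k = (5:ℝ)⁻¹ • ∑ i : Fin 5, (p i - p k) := by
      rw [Finset.sum_sub_distrib, smul_sub, Finset.sum_const, Finset.card_univ, Fintype.card_fin]
      module
    rw [hsum, map_smul, map_sum, smul_eq_mul]
    refine mul_pos (by norm_num) (Finset.sum_pos' (fun i _ => ?_) ⟨k + 2, Finset.mem_univ _, ?_⟩)
    · by_cases hi : i = k - 1 ∨ i = k ∨ i = k + 1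
      · exact (hline i hi).ge
      · obtain ⟨hi₁, hi₂, hi₃⟩ : i ≠ k - 1 ∧ i ≠ k ∧ i ≠ k + 1 := by tauto
        exact (hside i hi₁ hi₂ hi₃).le
    · exact hside (k + 2) (by omega) (by omega) (by omega)
  intro j hj₁ hj₂ hj₃
  have hj : ⟪v, p j - p k⟫ < 0 :=
    o.inner_neg_of_areaForm_pos_of_inner_neg horth hcentroid (hside j hj₁ hj₂ hj₃) hout
  have hne : p j - p k ≠ 0 := fun h => by simp [h] at hj
  rw [real_inner_smul_right, ← neg_sub (p j), inner_neg_right, norm_neg]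
  exact mul_pos (inv_pos.2 (norm_pos_iff.2 hne)) (neg_pos.2 hj)

/-- Let p be a convex planar pentagon (cross products ≥ 0,
strictly positive at every vertex other than k) whose vertex p k is aligned:
p k lies strictly between p (k-1) and p (k+1). Let v be a unit vector
orthogonal to the line p(k-1)p(k+1) pointing outward from the pentagon (away
from the centroid). Then moving p k with velocity v strictly increases, to
first order, the distance from p k to every non-adjacent vertex p j:
⟪v, (p k - p j)/|p k - p j|⟫ > 0. -/
theorem aligned_vertex_outward_pull_increases_diagonals
    (p : Fin 5 → EuclideanSpace ℝ (Fin 2)) (k : Fin 5)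
    (hinj : Function.Injective p)
    (hconv : ∀ i : Fin 5, 0 ≤ crossAt' p i)
    (hstrict : ∀ i : Fin 5, i + 1 ≠ k → 0 < crossAt' p i)
    (haligned : p k ∈ openSegment ℝ (p (k-1)) (p (k+1)))
    (v : EuclideanSpace ℝ (Fin 2)) (hv : ‖v‖ = 1)
    (horth : ⟪v, p (k+1) - p (k-1)⟫ = 0)
    (hout : ⟪v, (5:ℝ)⁻¹ • (∑ i : Fin 5, p i) - p k⟫ < 0) :
    ∀ j : Fin 5, j ≠ k - 1 → j ≠ k → j ≠ k + 1 →
      0 < ⟪v, ‖p k - p j‖⁻¹ • (p k - p j)⟫ :=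
  aligned_vertex_outward_pull_increases_diagonals_general p k hstrict haligned v horth hout
end

section
/- For a 4-bar linkage in 3-dimensional space with positive charges, every critical configuration of the effective Coulomb potential E = t/x + 1/y on the space of spatial configurations is planar. Abstractly: let p1,p2,p3,p4 ∈ ℝ³ be a non-planar configuration with the four edge lengths fixed; then there exists an infinitesimal flex (velocities v1,...,v4 preserving all four edge lengths to first order) that strictly increases both diagonals |p1p3| and |p2p4| to first order; consequently, for any t > 0, E strictly decreases along this flex and the configuration is not critical. -/
/-!
Unfold the tetrahedron: since `p 1 - p 0`, `p 2 - p 0`, `p 3 - p 0` are linearly independent,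
`p 0` can be given a velocity orthogonal to both edges at `p 0` but not to the diagonal
`p 0 p 2`, i.e. to first order `p 0` rotates about the axis `p 1 p 3` away from `p 2`.
Doing the same with `p 3` about the axis `p 0 p 2` gives an infinitesimal flex lengthening
both diagonals, along which each term of `E = t/x + 1/y` strictly decreases.
-/

open RealInnerProductSpace

theorem affineIndependent_of_not_coplanar {V P : Type*} [AddCommGroup V] [Module ℝ V]
    [AddTorsor V P] {p : Fin 4 → P} (h : ¬ Coplanar ℝ (Set.range p)) : AffineIndependent ℝ p := by
  by_contra hp
  exact h <| (coplanar_iff_finrank_le_two).2 <|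
    (finrank_vectorSpan_le_iff_not_affineIndependent ℝ p (by simp)).2 hp

section InnerProduct

variable {E : Type*} [NormedAddCommGroup E] [InnerProductSpace ℝ E]

theorem LinearIndependent.exists_inner_eq [FiniteDimensional ℝ E] {ι : Type*} {b : ι → E}
    (hb : LinearIndependent ℝ b) (c : ι → ℝ) : ∃ w : E, ∀ i, ⟪b i, w⟫ = c i := by
  obtain ⟨f, hf⟩ := LinearMap.exists_extend ((Finsupp.linearCombination ℝ c).comp hb.repr)
  refine ⟨(InnerProductSpace.toDual ℝ E).symm (LinearMap.toContinuousLinearMap f), fun i => ?_⟩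
  rw [real_inner_comm, InnerProductSpace.toDual_symm_apply]
  have hbi : b i ∈ Submodule.span ℝ (Set.range b) := Submodule.subset_span ⟨i, rfl⟩
  have := LinearMap.congr_fun hf ⟨b i, hbi⟩
  simp only [LinearMap.coe_comp, Function.comp_apply, Submodule.subtype_apply] at this
  simp [this, hb.repr_eq_single i ⟨b i, hbi⟩ rfl]

theorem HasDerivAt.norm {f : ℝ → E} {f' : E} {x : ℝ} (hf : HasDerivAt f f' x) (h0 : f x ≠ 0) :
    HasDerivAt (fun s => ‖f s‖) (⟪f x, f'⟫ / ‖f x‖) x := by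
  have hsq := hf.norm_sq.sqrt (by positivity)
  simp only [Real.sqrt_sq (norm_nonneg _)] at hsq
  convert hsq using 1
  field_simp

theorem HasDerivAt.dist {f g : ℝ → E} {f' g' : E} {x : ℝ} (hf : HasDerivAt f f' x)
    (hg : HasDerivAt g g' x) (hne : f x ≠ g x) :
    HasDerivAt (fun s => dist (f s) (g s)) (⟪g x - f x, g' - f'⟫ / dist (f x) (g x)) x := by
  simp only [dist_eq_norm']
  exact (hg.sub hf).norm (sub_ne_zero.2 hne.symm)

theorem exists_neg_hasDerivAt_div_dist_line {x y u v : E} {c : ℝ} (hc : 0 < c) (hxy : x ≠ y)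
    (h : 0 < ⟪y - x, v - u⟫) :
    ∃ d < 0, HasDerivAt (fun s : ℝ => c / dist (x + s • u) (y + s • v)) d 0 := by
  have hline (z w : E) : HasDerivAt (fun s : ℝ => z + s • w) w 0 := by
    simpa using ((hasDerivAt_id (0 : ℝ)).smul_const w).const_add z
  have hd := (hline x u).dist (hline y v) (by simpa using hxy)
  have hdist : 0 < dist x y := dist_pos.2 hxy
  refine ⟨_, ?_, (hasDerivAt_const (0 : ℝ) c).div hd (by simpa using hdist.ne')⟩
  simp only [zero_smul, add_zero, zero_mul, zero_sub]
  exact div_neg_of_neg_of_pos (neg_neg_of_pos (by positivity)) (by positivity)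

theorem AffineIndependent.exists_inner_sub_eq [FiniteDimensional ℝ E] {ι : Type*} {p : ι → E}
    (hp : AffineIndependent ℝ p) (i : ι) (c : ι → ℝ) :
    ∃ w : E, ∀ j ≠ i, ⟪p j - p i, w⟫ = c j := by
  rw [affineIndependent_iff_linearIndependent_vsub ℝ p i] at hp
  obtain ⟨w, hw⟩ := hp.exists_inner_eq fun j => c j
  exact ⟨w, fun j hj => hw ⟨j, hj⟩⟩

theorem AffineIndependent.exists_flex_increasing_diagonals [FiniteDimensional ℝ E]
    {p : Fin 4 → E} (hp : AffineIndependent ℝ p) :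
    ∃ v : Fin 4 → E, (∀ i : Fin 4, ⟪p (i+1) - p i, v (i+1) - v i⟫ = 0) ∧
      0 < ⟪p 2 - p 0, v 2 - v 0⟫ ∧ 0 < ⟪p 3 - p 1, v 3 - v 1⟫ := by
  obtain ⟨w₀, hw₀⟩ := hp.exists_inner_sub_eq 0 ![0, 0, -1, 0]
  obtain ⟨w₃, hw₃⟩ := hp.exists_inner_sub_eq 3 ![0, -1, 0, 0]
  have h10 := hw₀ 1 (by decide)
  have h20 := hw₀ 2 (by decide)
  have h30 := hw₀ 3 (by decide)
  have h03 := hw₃ 0 (by decide)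
  have h13 := hw₃ 1 (by decide)
  have h23 := hw₃ 2 (by decide)
  simp only [Matrix.cons_val, inner_sub_left] at h10 h20 h30 h03 h13 h23
  refine ⟨![w₀, 0, 0, w₃], fun i => ?_, ?_, ?_⟩
  · fin_cases i <;> simp [inner_sub_left, inner_sub_right] <;> linarith
  · simp [inner_sub_left]; linarith
  · simp [inner_sub_left]; linarith

end InnerProduct

theorem spatial_critical_points_are_planar_general
    (p : Fin 4 → EuclideanSpace ℝ (Fin 3))
    (hnonplanar : ¬ Coplanar ℝ (Set.range p)) :
    ∃ v : Fin 4 → EuclideanSpace ℝ (Fin 3),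
      (∀ i : Fin 4, ⟪p (i+1) - p i, v (i+1) - v i⟫ = 0) ∧
      0 < ⟪p 2 - p 0, v 2 - v 0⟫ ∧
      0 < ⟪p 3 - p 1, v 3 - v 1⟫ ∧
      ∀ t : ℝ, 0 < t →
        deriv (fun s : ℝ =>
          t / dist (p 0 + s • v 0) (p 2 + s • v 2)
            + 1 / dist (p 1 + s • v 1) (p 3 + s • v 3)) 0 < 0 := by
  have hp := affineIndependent_of_not_coplanar hnonplanar
  obtain ⟨v, hflex, h02, h13⟩ := hp.exists_flex_increasing_diagonals
  refine ⟨v, hflex, h02, h13, fun t ht => ?_⟩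
  obtain ⟨d₁, hd₁, hE₁⟩ := exists_neg_hasDerivAt_div_dist_line ht (hp.injective.ne (by decide)) h02
  obtain ⟨d₂, hd₂, hE₂⟩ :=
    exists_neg_hasDerivAt_div_dist_line one_pos (hp.injective.ne (by decide)) h13
  rw [(hE₁.fun_add hE₂).deriv]
  exact add_neg hd₁ hd₂

/-- A non-planar (non-coplanar) spatial configuration of a 4-bar
linkage admits an infinitesimal flex (velocities preserving all four edge
lengths to first order) which strictly increases both diagonals to first
order; consequently, for every charge t > 0 the potential E = t/x + 1/y
strictly decreases along this flex, so the configuration is not critical. -/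
theorem spatial_critical_points_are_planar
    (p : Fin 4 → EuclideanSpace ℝ (Fin 3))
    (hinj : Function.Injective p)
    (hnonplanar : ¬ Coplanar ℝ (Set.range p)) :
    ∃ v : Fin 4 → EuclideanSpace ℝ (Fin 3),
      (∀ i : Fin 4, ⟪p (i+1) - p i, v (i+1) - v i⟫ = 0) ∧
      0 < ⟪p 2 - p 0, v 2 - v 0⟫ ∧
      0 < ⟪p 3 - p 1, v 3 - v 1⟫ ∧
      ∀ t : ℝ, 0 < t →
        deriv (fun s : ℝ =>
          t / dist (p 0 + s • v 0) (p 2 + s • v 2)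
            + 1 / dist (p 1 + s • v 1) (p 3 + s • v 3)) 0 < 0 :=
  spatial_critical_points_are_planar_general p hnonplanar
end
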